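/- The map Ψ is a bijection from the set D_n of Dyck words of semilength n to itself, for every n ≥ 0. -/

import Mathlib

attribute [local instance] Classical.propDecidable

namespace DyckBij

/-- A word over `Bool` (`true` = up-step `u`, `false` = down-step `d`) is a Dyck word:
equally many `u`'s and `d`'s, and every prefix has at least as many `u`'s as `d`'s. -/
def IsDyck (w : List Bool) : Prop :=
  w.count false = w.count true ∧
    ∀ p : List Bool, p <+: w → p.count false ≤ p.count true

/-- `Matched w i j`: the `u` at (0-indexed) position `i` of `w` is matched (as in matched
parentheses) with the `d` at position `j`, i.e. `w = A u B d C` with `B` a Dyck word,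
`|A| = i` and `j = i + |B| + 1`. -/
def Matched (w : List Bool) (i j : ℕ) : Prop :=
  ∃ A B C : List Bool, IsDyck B ∧ w = A ++ true :: (B ++ false :: C) ∧
    A.length = i ∧ j = i + B.length + 1

/-- Positions `i` and `j` form a matched pair of steps of `w`. -/
def MatchPair (w : List Bool) (i j : ℕ) : Prop :=
  Matched w i j ∨ Matched w j i

/-- The 0-indexed reading order `σ^{(r)}` on a word of length `L`: the first `2r` positions
are read in order, and the remaining positions are read in zigzag
`2r, L-1, 2r+1, L-2, …` (0-indexed). For `r = 0` this is the zigzag order `σ`. -/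
def zigR (r L p : ℕ) : ℕ :=
  if p < 2 * r then p
  else if p % 2 = 0 then p / 2 + r
  else L + r - (p + 1) / 2

/-- The bijection `Ψ_r`: the `p`-th letter of `Ψ_r(w)` is `u` iff the match of the
`σ^{(r)}_p`-th step of `w` does not occur among the previously read steps
`σ^{(r)}_0, …, σ^{(r)}_{p-1}`. -/
noncomputable def psiR (r : ℕ) (w : List Bool) : List Bool :=
  List.ofFn fun p : Fin w.length =>
    if ∃ p' : ℕ, p' < (p : ℕ) ∧
        MatchPair w (zigR r w.length p') (zigR r w.length (p : ℕ))
    then false else true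

/-- The bijection `Ψ = Ψ_0`. -/
noncomputable def psi : List Bool → List Bool := psiR 0

/-- Number of tunnels of `w` with `|A| = |C| + 2r` (midpoint at `x = n + r`),
i.e. decompositions `w = A u B d C` with `B` a Dyck word; tunnels are indexed by `|A|`. -/
noncomputable def tunEq (r : ℕ) (w : List Bool) : ℕ :=
  {i : ℕ | ∃ A B C : List Bool, IsDyck B ∧ w = A ++ true :: (B ++ false :: C) ∧
    A.length = i ∧ A.length = C.length + 2 * r}.ncard

/-- Number of tunnels of `w` with `|A| > |C| + 2r` (midpoint in `x > n + r`). -/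
noncomputable def tunGt (r : ℕ) (w : List Bool) : ℕ :=
  {i : ℕ | ∃ A B C : List Bool, IsDyck B ∧ w = A ++ true :: (B ++ false :: C) ∧
    A.length = i ∧ C.length + 2 * r < A.length}.ncard

/-- Number of tunnels of `w` with `|A| ≤ |C| + 2r` (midpoint in `x ≤ n + r`). -/
noncomputable def tunLe (r : ℕ) (w : List Bool) : ℕ :=
  {i : ℕ | ∃ A B C : List Bool, IsDyck B ∧ w = A ++ true :: (B ++ false :: C) ∧
    A.length = i ∧ A.length ≤ C.length + 2 * r}.ncard

/-- Number of centered tunnels `ct(w)`. -/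
noncomputable def ctun (w : List Bool) : ℕ := tunEq 0 w

/-- Number of right tunnels `rt(w)`. -/
noncomputable def rtun (w : List Bool) : ℕ := tunGt 0 w

/-- Number of left tunnels `lt(w)`: tunnels with `|A| < |C|`. -/
noncomputable def ltun (w : List Bool) : ℕ :=
  {i : ℕ | ∃ A B C : List Bool, IsDyck B ∧ w = A ++ true :: (B ++ false :: C) ∧
    A.length = i ∧ A.length < C.length}.ncard

/-- Number of multitunnels of `w` with `|A| = |C| + 2r` (midpoint at `x = n + r`):
decompositions `w = A B C` with `B` a nonempty Dyck word, indexed by `(|A|, |B|)`. -/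
noncomputable def mtunEq (r : ℕ) (w : List Bool) : ℕ :=
  {q : ℕ × ℕ | ∃ A B C : List Bool, IsDyck B ∧ B ≠ [] ∧ w = A ++ B ++ C ∧
    A.length = q.1 ∧ B.length = q.2 ∧ A.length = C.length + 2 * r}.ncard

/-- Number of centered multitunnels `cmt(w)`. -/
noncomputable def cmtun (w : List Bool) : ℕ := mtunEq 0 w

/-- Number of hills `h(w)`: decompositions `w = X u d Y` with `X, Y` Dyck words. -/
noncomputable def numHills (w : List Bool) : ℕ :=
  {i : ℕ | ∃ X Y : List Bool, IsDyck X ∧ IsDyck Y ∧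
    w = X ++ true :: false :: Y ∧ X.length = i}.ncard

/-- Number of hills of `w` lying in `x > 2r`, i.e. with `|X| ≥ 2r`. -/
noncomputable def numHillsAfter (r : ℕ) (w : List Bool) : ℕ :=
  {i : ℕ | ∃ X Y : List Bool, IsDyck X ∧ IsDyck Y ∧
    w = X ++ true :: false :: Y ∧ X.length = i ∧ 2 * r ≤ X.length}.ncard

/-- Number of arches (equivalently, returns) `ret(w)`: decompositions
`w = X (u B d) Y` with `X, B, Y` Dyck words. -/
noncomputable def numArches (w : List Bool) : ℕ :=
  {i : ℕ | ∃ X B Y : List Bool, IsDyck X ∧ IsDyck B ∧ IsDyck Y ∧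
    w = X ++ true :: (B ++ false :: Y) ∧ X.length = i}.ncard

/-- Number of arches of `w` lying in `x ≥ 2r`, i.e. with `|X| ≥ 2r`. -/
noncomputable def numArchesAfter (r : ℕ) (w : List Bool) : ℕ :=
  {i : ℕ | ∃ X B Y : List Bool, IsDyck X ∧ IsDyck B ∧ IsDyck Y ∧
    w = X ++ true :: (B ++ false :: Y) ∧ X.length = i ∧ 2 * r ≤ X.length}.ncard

/-- Number of odd rises `odr(w)`: `u`-steps at odd 1-indexed positions
(even 0-indexed positions). -/
noncomputable def oddRises (w : List Bool) : ℕ :=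
  {p : ℕ | p < w.length ∧ p % 2 = 0 ∧ w.getD p false = true}.ncard

/-- Number of even rises `er(w)`: `u`-steps at even 1-indexed positions
(odd 0-indexed positions). -/
noncomputable def evenRises (w : List Bool) : ℕ :=
  {p : ℕ | p < w.length ∧ p % 2 = 1 ∧ w.getD p false = true}.ncard

/-- Number of odd rises of `w` at 1-indexed positions `> 2r`. -/
noncomputable def oddRisesAfter (r : ℕ) (w : List Bool) : ℕ :=
  {p : ℕ | p < w.length ∧ p % 2 = 0 ∧ 2 * r ≤ p ∧ w.getD p false = true}.ncard

/-- Number of even rises of `w` at 1-indexed positions `> 2r`. -/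
noncomputable def evenRisesAfter (r : ℕ) (w : List Bool) : ℕ :=
  {p : ℕ | p < w.length ∧ p % 2 = 1 ∧ 2 * r ≤ p ∧ w.getD p false = true}.ncard

/-- Number of `u`-steps of `w` at 1-indexed positions `≤ 2r`. -/
noncomputable def upstepsBefore (r : ℕ) (w : List Bool) : ℕ :=
  {p : ℕ | p < w.length ∧ p < 2 * r ∧ w.getD p false = true}.ncard

/-- Number of peaks of `w`: occurrences of the factor `u d`. -/
noncomputable def numPeaks (w : List Bool) : ℕ :=
  {i : ℕ | i + 2 ≤ w.length ∧ w.getD i false = true ∧ w.getD (i + 1) true = false}.ncard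

/-- Number of occurrences in `w` of a factor of length 3 beginning with `u`
and ending with `d` (occurrences of `u⋆d`). -/
noncomputable def numUStarD (w : List Bool) : ℕ :=
  {i : ℕ | i + 3 ≤ w.length ∧ w.getD i false = true ∧ w.getD (i + 2) true = false}.ncard

/-- `ih(w)`: 1 if `w` begins with the factor `u d`, else 0. -/
noncomputable def initHill (w : List Bool) : ℕ :=
  if w.take 2 = [true, false] then 1 else 0

/-- `fh(w)`: 1 if `w = X u d` with `X` a Dyck word, else 0. -/
noncomputable def finHill (w : List Bool) : ℕ :=
  if ∃ X : List Bool, IsDyck X ∧ w = X ++ [true, false] then 1 else 0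

/-- `π` avoids the pattern 321. -/
def Avoids321 {n : ℕ} (π : Equiv.Perm (Fin n)) : Prop :=
  ¬ ∃ i j k : Fin n, i < j ∧ j < k ∧ π k < π j ∧ π j < π i

/-- `π` avoids the pattern 132. -/
def Avoids132 {n : ℕ} (π : Equiv.Perm (Fin n)) : Prop :=
  ¬ ∃ i j k : Fin n, i < j ∧ j < k ∧ π i < π k ∧ π k < π j

/-- Number of fixed points of `π`. -/
noncomputable def fixedPts {n : ℕ} (π : Equiv.Perm (Fin n)) : ℕ :=
  {i : Fin n | π i = i}.ncard

/-- Number of excedances of `π`. -/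
noncomputable def excedances {n : ℕ} (π : Equiv.Perm (Fin n)) : ℕ :=
  {i : Fin n | i < π i}.ncard

/-- Number of descents of `π`. -/
noncomputable def descents {n : ℕ} (π : Equiv.Perm (Fin n)) : ℕ :=
  {i : ℕ | ∃ (h1 : i < n) (h2 : i + 1 < n), π ⟨i + 1, h2⟩ < π ⟨i, h1⟩}.ncard

/-- `α_r(π) = #{i : π(i) = i + r}` (stated 0-indexed, equivalent to the 1-indexed version). -/
noncomputable def alphaStat {n : ℕ} (r : ℕ) (π : Equiv.Perm (Fin n)) : ℕ :=
  {i : Fin n | (π i : ℕ) = (i : ℕ) + r}.ncard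

/-- `β_r(π) = #{i : i > r, π(i) = i}` (for 1-indexed `i`; 0-indexed this is `r ≤ i`). -/
noncomputable def betaStat {n : ℕ} (r : ℕ) (π : Equiv.Perm (Fin n)) : ℕ :=
  {i : Fin n | r ≤ (i : ℕ) ∧ π i = i}.ncard

/-!
`Ψ` reads the steps of `w` in zigzag order, even times from the left end of the unread
interval and odd times from its right end, and writes `u` when a step is read before its
partner. Transported to reading times, the matching of `w` becomes a fixed-point-free
involution `f`, and `Ψ(w)` marks the indices `k < f k`; it is a Dyck word because `f` injects
the closers among the first `m` indices into the openers.

For injectivity, the letter of `w` read at time `k` only depends on whether `k < f k` and, if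
not, on the side (parity) of `f k`. Since the matching of `w` is noncrossing, a closing step
closes an arc of its own side exactly when that side still has open arcs, and the numbers of
open arcs on each side evolve by a rule that only reads `Ψ(w)`. As `D_n` is finite, an
injective self-map of it is a bijection.
-/

section Matching

variable {w : List Bool} {i j p : ℕ}

lemma IsDyck.length_even (hw : IsDyck w) : Even w.length := by
  have := List.count_false_add_count_true w
  have := hw.1
  exact ⟨w.count true, by omega⟩

def mirror (w : List Bool) : List Bool := (w.map not).reverse

@[simp] lemma length_mirror (w : List Bool) : (mirror w).length = w.length := by
  simp [mirror]

@[simp] lemma mirror_mirror (w : List Bool) : mirror (mirror w) = w := by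
  simp [mirror, Function.comp_def]

@[simp] lemma count_mirror (w : List Bool) (b : Bool) : (mirror w).count b = w.count (!b) := by
  rw [mirror, List.count_reverse, ← Bool.not_not b,
    List.count_map_of_injective _ _ Bool.not_injective, Bool.not_not]

@[simp] lemma mirror_append (u v : List Bool) : mirror (u ++ v) = mirror v ++ mirror u := by
  simp [mirror]

@[simp] lemma mirror_cons (b : Bool) (u : List Bool) : mirror (b :: u) = mirror u ++ [!b] := by
  simp [mirror]

lemma getElem?_mirror (hp : p < w.length) : (mirror w)[w.length - 1 - p]? = w[p]?.map not := by
  rw [mirror, List.getElem?_reverse (by simp; omega), List.length_map,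
    show w.length - 1 - (w.length - 1 - p) = p by omega, List.getElem?_map]

lemma IsDyck.mirror (hw : IsDyck w) : IsDyck (mirror w) := by
  refine ⟨by simpa using hw.1.symm, fun s hs => ?_⟩
  obtain ⟨t, rfl⟩ : ∃ t, w = t ++ DyckBij.mirror s := by
    obtain ⟨r, hr⟩ := hs
    exact ⟨DyckBij.mirror r, by rw [← mirror_append, hr, mirror_mirror]⟩
  have ht := hw.2 t (List.prefix_append _ _)
  have htot := hw.1
  simp only [List.count_append, count_mirror, Bool.not_true, Bool.not_false] at htot ⊢
  omega

lemma Matched.lt (h : Matched w i j) : i < j := by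
  obtain ⟨A, B, C, -, -, -, rfl⟩ := h
  omega

lemma Matched.lt_length (h : Matched w i j) : j < w.length := by
  obtain ⟨A, B, C, -, rfl, rfl, rfl⟩ := h
  simp
  omega

lemma Matched.getElem? (h : Matched w i j) : w[i]? = some true ∧ w[j]? = some false := by
  obtain ⟨A, B, C, -, rfl, rfl, rfl⟩ := h
  refine ⟨by simp, ?_⟩
  rw [show A ++ true :: (B ++ false :: C) = (A ++ true :: B) ++ false :: C by simp,
    show A.length + B.length + 1 = (A ++ true :: B).length by simp; omega]
  simp only [List.getElem?_append_right le_rfl, Nat.sub_self, List.getElem?_cons_zero]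

lemma Matched.mirror (h : Matched w i j) :
    Matched (mirror w) (w.length - 1 - j) (w.length - 1 - i) := by
  obtain ⟨A, B, C, hB, rfl, rfl, rfl⟩ := h
  refine ⟨DyckBij.mirror C, DyckBij.mirror B, DyckBij.mirror A, hB.mirror, by simp, ?_, ?_⟩ <;>
    simp <;> omega

lemma Matched.append {B : List Bool} (h : Matched B i j) (A C : List Bool) :
    Matched (A ++ B ++ C) (A.length + i) (A.length + j) := by
  obtain ⟨A₁, B₁, C₁, hB₁, rfl, rfl, rfl⟩ := h
  exact ⟨A ++ A₁, B₁, C₁ ++ C, hB₁, by simp, by simp, by omega⟩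

lemma Matched.right_unique {j' : ℕ} (h : Matched w i j) (h' : Matched w i j') : j = j' := by
  obtain ⟨A, B, C, hB, rfl, rfl, rfl⟩ := h
  obtain ⟨A', B', C', hB', hw, hA, rfl⟩ := h'
  obtain ⟨rfl, hBC⟩ := List.append_inj hw (by simpa using hA.symm)
  simp only [List.cons.injEq, true_and] at hBC
  -- a Dyck word followed by `d` is never a prefix of a Dyck word
  have key : ∀ {B B' C C' : List Bool}, IsDyck B → IsDyck B' →
      B ++ false :: C = B' ++ false :: C' → ¬ B.length < B'.length := by
    intro B B' C C' hB hB' heq hlt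
    have hpre : B ++ [false] <+: B' := List.prefix_of_prefix_length_le
      ⟨C, by simpa using heq⟩ (List.prefix_append _ _) (by simp; omega)
    have hc := hB'.2 _ hpre
    have := hB.1
    simp at hc
    omega
  have := key hB hB' hBC
  have := key hB' hB hBC.symm
  omega

lemma Matched.left_unique {i' : ℕ} (h : Matched w i j) (h' : Matched w i' j) : i = i' := by
  have := h.mirror.right_unique h'.mirror
  have := h.lt.trans h.lt_length
  have := h'.lt.trans h'.lt_length
  omega

/-- Discrete intermediate value property: the `d`-surplus of the prefixes moves by steps of one. -/
lemma exists_take_count_eq (l : List Bool) {c : ℕ} (h : c + l.count true ≤ l.count false) :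
    ∃ m, (l.take m).count false = (l.take m).count true + c ∧
      ∀ m' < m, (l.take m').count false < (l.take m').count true + c := by
  have hex : ∃ m, c + (l.take m).count true ≤ (l.take m).count false :=
    ⟨l.length, by simpa using h⟩
  refine ⟨Nat.find hex, ?_, fun m' hm' => by have := Nat.find_min hex hm'; omega⟩
  have hspec := Nat.find_spec hex
  obtain ⟨m, hm⟩ : ∃ m, Nat.find hex = m := ⟨_, rfl⟩
  rw [hm] at hspec ⊢
  cases m with
  | zero => simp only [List.take_zero, List.count_nil] at hspec ⊢; omega
  | succ m =>
    have hprev := Nat.find_min hex (show m < Nat.find hex by omega)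
    rcases Nat.lt_or_ge m l.length with hml | hml
    · have hsplit : l.take (m + 1) = l.take m ++ [l[m]] := by
        rw [List.take_add_one, List.getElem?_eq_getElem hml]; simp
      rw [hsplit] at hspec ⊢
      cases h : l[m] <;> simp [h] at hspec hprev ⊢ <;> omega
    · rw [List.take_of_length_le (by omega)] at hspec ⊢
      rw [List.take_of_length_le hml] at hprev
      omega

lemma exists_isDyck_append_false {R : List Bool} (hR : 1 + R.count true ≤ R.count false) :
    ∃ B C, IsDyck B ∧ R = B ++ false :: C := by
  obtain ⟨m, hm, hmin⟩ := exists_take_count_eq R hR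
  obtain ⟨m, rfl⟩ : ∃ m', m = m' + 1 := Nat.exists_eq_add_one.mpr (by
    by_contra h
    obtain rfl : m = 0 := by omega
    simp at hm)
  have hmR : m < R.length := by
    by_contra h
    have := hmin R.length (by omega)
    rw [List.take_of_length_le (by omega)] at hm
    rw [List.take_length] at this
    omega
  have hsplit : R.take (m + 1) = R.take m ++ [R[m]] := by
    rw [List.take_add_one, List.getElem?_eq_getElem hmR]; simp
  rw [hsplit] at hm
  have hRm : R[m] = false := by
    have := hmin m (by omega)
    cases h : R[m]
    · rfl
    · simp [h] at hm
      omega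
  refine ⟨R.take m, R.drop (m + 1), ⟨by simpa [hRm] using hm, fun q hq => ?_⟩, ?_⟩
  · have hql : q.length ≤ m := by simpa using hq.length_le.trans (List.length_take_le m R)
    have := hmin q.length (by omega)
    rw [List.prefix_iff_eq_take.mp (hq.trans (List.take_prefix m R))]
    omega
  · rw [← hRm, ← List.drop_eq_getElem_cons hmR, List.take_append_drop]

lemma IsDyck.exists_matched (hw : IsDyck w) (hp : w[p]? = some true) : ∃ j, Matched w p j := by
  obtain ⟨hpL, hwp⟩ := List.getElem?_eq_some_iff.mp hp
  have hw' : w = w.take p ++ true :: w.drop (p + 1) := by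
    conv_lhs => rw [← List.take_append_drop p w, List.drop_eq_getElem_cons hpL, hwp]
  have hR : 1 + (w.drop (p + 1)).count true ≤ (w.drop (p + 1)).count false := by
    have := hw.2 _ (List.take_prefix p w)
    have := hw.1
    rw [hw'] at this
    simp at this
    omega
  obtain ⟨B, C, hB, hBC⟩ := exists_isDyck_append_false hR
  exact ⟨p + B.length + 1, w.take p, B, C, hB, hBC ▸ hw', by simp; omega, rfl⟩

lemma IsDyck.exists_matched_left (hw : IsDyck w) (hp : w[p]? = some false) :
    ∃ i, Matched w i p := by
  have hpL : p < w.length := (List.getElem?_eq_some_iff.mp hp).1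
  obtain ⟨j, hj⟩ := hw.mirror.exists_matched (p := w.length - 1 - p)
    (by rw [getElem?_mirror hpL, hp]; rfl)
  refine ⟨w.length - 1 - j, ?_⟩
  simpa [show w.length - 1 - (w.length - 1 - p) = p by omega] using hj.mirror

lemma MatchPair.symm (h : MatchPair w i j) : MatchPair w j i := Or.symm h

lemma MatchPair.lt_length (h : MatchPair w i j) : i < w.length := by
  rcases h with h | h
  · exact h.lt.trans h.lt_length
  · exact h.lt_length

lemma MatchPair.unique {j' : ℕ} (h : MatchPair w p j) (h' : MatchPair w p j') : j = j' := by
  rcases h with h | h <;> rcases h' with h' | h'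
  · exact h.right_unique h'
  · exact absurd (h.getElem?.1.symm.trans h'.getElem?.2) (by simp)
  · exact absurd (h'.getElem?.1.symm.trans h.getElem?.2) (by simp)
  · exact h.left_unique h'

lemma MatchPair.append {B : List Bool} (h : MatchPair B i j) (A C : List Bool) :
    MatchPair (A ++ B ++ C) (A.length + i) (A.length + j) :=
  h.imp (·.append A C) (·.append A C)

lemma IsDyck.exists_matchPair (hw : IsDyck w) (hp : p < w.length) : ∃ j, MatchPair w p j := by
  obtain ⟨b, hb⟩ : ∃ b, w[p]? = some b := ⟨w[p], List.getElem?_eq_getElem hp⟩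
  cases b
  · obtain ⟨i, hi⟩ := hw.exists_matched_left hb
    exact ⟨i, Or.inr hi⟩
  · obtain ⟨j, hj⟩ := hw.exists_matched hb
    exact ⟨j, Or.inl hj⟩

/-- Junk value `p` when `p` is not a position of `w`. -/
noncomputable def partner (w : List Bool) (p : ℕ) : ℕ :=
  if h : ∃ j, MatchPair w p j then h.choose else p

lemma MatchPair.partner_eq (h : MatchPair w p j) : partner w p = j := by
  have hex : ∃ j, MatchPair w p j := ⟨j, h⟩
  rw [partner, dif_pos hex]
  exact hex.choose_spec.unique h

lemma IsDyck.matchPair_partner (hw : IsDyck w) (hp : p < w.length) :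
    MatchPair w p (partner w p) := by
  obtain ⟨j, hj⟩ := hw.exists_matchPair hp
  rwa [hj.partner_eq]

lemma IsDyck.partner_lt_length (hw : IsDyck w) (hp : p < w.length) : partner w p < w.length :=
  (hw.matchPair_partner hp).symm.lt_length

lemma IsDyck.partner_partner (hw : IsDyck w) (hp : p < w.length) :
    partner w (partner w p) = p :=
  (hw.matchPair_partner hp).symm.partner_eq

lemma IsDyck.partner_ne (hw : IsDyck w) (hp : p < w.length) : partner w p ≠ p := by
  rcases hw.matchPair_partner hp with h | h <;> have := h.lt <;> omega

lemma IsDyck.getElem?_eq_decide (hw : IsDyck w) (hp : p < w.length) :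
    w[p]? = some (decide (p < partner w p)) := by
  rcases hw.matchPair_partner hp with h | h
  · rw [h.getElem?.1, decide_eq_true h.lt]
  · rw [h.getElem?.2, decide_eq_false (by have := h.lt; omega)]

lemma IsDyck.partner_lt_partner (hw : IsDyck w) {x y : ℕ} (hx : x < w.length) (hxy : x < y)
    (hy : y < partner w x) : partner w y < partner w x := by
  obtain ⟨A, B, C, hB, hwABC, rfl, hj⟩ : Matched w x (partner w x) := by
    rcases hw.matchPair_partner hx with h | h
    · exact h
    · exact absurd h.lt (by omega)
  obtain ⟨z, hz⟩ := hB.exists_matchPair (p := y - A.length - 1) (by omega)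
  have hlift := hz.append (A ++ [true]) (false :: C)
  rw [show A ++ [true] ++ B ++ false :: C = w by simp [hwABC],
    show (A ++ [true]).length + (y - A.length - 1) = y by simp; omega] at hlift
  have := hz.symm.lt_length
  rw [hlift.partner_eq, List.length_append, List.length_singleton]
  omega

end Matching

section Zigzag

variable {L s t : ℕ}

lemma zigR_zero (L p : ℕ) : zigR 0 L p = if p % 2 = 0 then p / 2 else L - (p + 1) / 2 := by
  simp [zigR]

def zigInv (L j : ℕ) : ℕ := if 2 * j < L then 2 * j else 2 * (L - j) - 1

lemma zigR_lt (hs : s < L) : zigR 0 L s < L := by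
  rw [zigR_zero]; split_ifs <;> omega

lemma zigInv_lt (hs : s < L) : zigInv L s < L := by
  rw [zigInv]; split_ifs <;> omega

lemma zigInv_zigR (hs : s < L) : zigInv L (zigR 0 L s) = s := by
  rw [zigR_zero]; split_ifs <;> rw [zigInv] <;> split_ifs <;> omega

lemma zigR_zigInv (hs : s < L) : zigR 0 L (zigInv L s) = s := by
  rw [zigInv]; split_ifs <;> rw [zigR_zero] <;> split_ifs <;> omega

/-- Even times read the unread interval from the left, odd times from the right. -/
lemma zigR_lt_zigR_iff (hL : Even L) (hs : s < L) (ht : t < L) :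
    zigR 0 L s < zigR 0 L t ↔ (s < t ∧ s % 2 = 0) ∨ (t < s ∧ t % 2 = 1) := by
  obtain ⟨n, rfl⟩ := hL
  rw [zigR_zero, zigR_zero]
  split_ifs <;> omega

end Zigzag

section Pairing

variable {L : ℕ} {f g : ℕ → ℕ}

structure IsPairing (L : ℕ) (f : ℕ → ℕ) : Prop where
  lt : ∀ k < L, f k < L
  involutive : ∀ k < L, f (f k) = k
  ne : ∀ k < L, f k ≠ k

def pairingWord (L : ℕ) (f : ℕ → ℕ) : List Bool :=
  (List.range L).map fun k => decide (k < f k)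

lemma count_map_range (c : ℕ → Bool) (m : ℕ) (b : Bool) :
    ((List.range m).map c).count b = ((Finset.range m).filter fun k => c k = b).card := by
  induction m with
  | zero => simp
  | succ m ih =>
    rw [List.range_succ, List.map_append, List.count_append, ih, Finset.range_add_one,
      Finset.filter_insert]
    split_ifs with h <;> simp [h]

lemma IsPairing.card_closers_le (hf : IsPairing L f) {m : ℕ} (hm : m ≤ L) :
    ((Finset.range m).filter fun k => decide (k < f k) = false).card ≤
      ((Finset.range m).filter fun k => decide (k < f k) = true).card := by
  refine Finset.card_le_card_of_injOn f (fun k hk => ?_) (fun a ha b hb hab => ?_)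
  · simp only [Finset.coe_filter, Finset.mem_range, decide_eq_false_iff_not, not_lt,
      Set.mem_ofPred_eq, decide_eq_true_eq] at hk ⊢
    have := hf.ne k (by omega)
    rw [hf.involutive k (by omega)]
    omega
  · simp only [Finset.coe_filter, Finset.mem_range, Set.mem_ofPred_eq] at ha hb
    rw [← hf.involutive a (by omega), hab, hf.involutive b (by omega)]

lemma IsPairing.card_closers_eq (hf : IsPairing L f) :
    ((Finset.range L).filter fun k => decide (k < f k) = false).card =
      ((Finset.range L).filter fun k => decide (k < f k) = true).card := by
  have hmaps : ∀ b, Set.MapsTo f ((Finset.range L).filter fun k => decide (k < f k) = b)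
      ((Finset.range L).filter fun k => decide (k < f k) = !b) := by
    intro b k hk
    simp only [Finset.coe_filter, Finset.mem_range, Set.mem_ofPred_eq] at hk ⊢
    have := hf.ne k hk.1
    rw [hf.involutive k hk.1, ← hk.2]
    refine ⟨hf.lt k hk.1, ?_⟩
    cases h : decide (k < f k) <;> simp at h ⊢ <;> omega
  exact Finset.card_nbij' f f (hmaps false) (hmaps true)
    (fun k hk => hf.involutive k (Finset.mem_range.mp (Finset.mem_filter.mp hk).1))
    (fun k hk => hf.involutive k (Finset.mem_range.mp (Finset.mem_filter.mp hk).1))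

lemma IsPairing.isDyck_pairingWord (hf : IsPairing L f) : IsDyck (pairingWord L f) := by
  refine ⟨?_, fun q hq => ?_⟩
  · rw [pairingWord, count_map_range, count_map_range]
    exact hf.card_closers_eq
  · rw [List.prefix_iff_eq_take.mp hq, pairingWord, ← List.map_take, List.take_range,
      count_map_range, count_map_range]
    exact hf.card_closers_le (min_le_right _ _)

/-- Reading even times from the left and odd times from the right, `openArcs f k e` counts
the arcs of side `e` (`t % 2 = e`) that are still open after the first `k` reads. -/
noncomputable def openArcs (f : ℕ → ℕ) (k e : ℕ) : ℕ :=
  ((Finset.range k).filter fun t => t % 2 = e ∧ k ≤ f t).card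

lemma IsPairing.openArcs_succ (hf : IsPairing L f) {k : ℕ} (hk : k < L) (e : ℕ) :
    openArcs f (k + 1) e + (if f k < k ∧ f k % 2 = e then 1 else 0) =
      openArcs f k e + (if k < f k ∧ k % 2 = e then 1 else 0) := by
  -- among `t < k`, only `t = f k` is paired with `k` itself
  have hsplit : ∀ t ∈ Finset.range k, (if t % 2 = e ∧ k ≤ f t then 1 else 0) =
      (if t % 2 = e ∧ k + 1 ≤ f t then 1 else 0) +
        (if t = f k then if t % 2 = e then 1 else 0 else 0) := by
    intro t ht
    have ht : t < k := Finset.mem_range.mp ht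
    by_cases h : t = f k
    · subst h
      simp [hf.involutive k hk]
    · have : f t ≠ k := fun h' => h (h' ▸ (hf.involutive t (by omega)).symm)
      rw [if_neg h, add_zero]
      split_ifs <;> omega
  simp only [openArcs, Finset.card_filter, Finset.sum_range_succ, Finset.sum_congr rfl hsplit,
    Finset.sum_add_distrib, Finset.sum_ite_eq', Finset.mem_range]
  split_ifs <;> omega

def ClosesOwnSideIffOpen (L : ℕ) (f : ℕ → ℕ) : Prop :=
  ∀ k < L, f k < k → (f k % 2 = k % 2 ↔ openArcs f k (k % 2) ≠ 0)

/-- The open-arc counts of `f` and `g` evolve identically. -/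
lemma IsPairing.mod_two_eq_of_lt_iff (hf : IsPairing L f) (hg : IsPairing L g)
    (hf' : ClosesOwnSideIffOpen L f) (hg' : ClosesOwnSideIffOpen L g)
    (hfg : ∀ k < L, k < f k ↔ k < g k) : ∀ k < L, f k < k → f k % 2 = g k % 2 := by
  have hside : ∀ k < L, f k < k → openArcs f k (k % 2) = openArcs g k (k % 2) →
      g k < k ∧ f k % 2 = g k % 2 := by
    intro k hk hfk hopen
    have hgk : g k < k := by have := hg.ne k hk; have := hfg k hk; omega
    have := hf' k hk hfk
    have := hg' k hk hgk
    refine ⟨hgk, ?_⟩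
    rw [hopen] at *
    omega
  have hopen : ∀ k ≤ L, ∀ e, openArcs f k e = openArcs g k e := by
    intro k
    induction k with
    | zero => simp [openArcs]
    | succ k ih =>
      intro hk e
      have hf1 := hf.openArcs_succ (by omega : k < L) e
      have hg1 := hg.openArcs_succ (by omega : k < L) e
      have := hf.ne k (by omega)
      have := hg.ne k (by omega)
      have := hfg k (by omega)
      rw [ih (by omega)] at hf1
      by_cases hlt : k < f k
      · split_ifs at hf1 hg1 <;> omega
      · obtain ⟨-, hpar⟩ := hside k (by omega) (by omega) (ih (by omega) _)
        split_ifs at hf1 hg1 <;> omega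
  exact fun k hk hfk => (hside k hk hfk (hopen k hk.le _)).2

end Pairing

section Psi

variable {w : List Bool} {k : ℕ}

noncomputable def partnerTime (w : List Bool) (k : ℕ) : ℕ :=
  zigInv w.length (partner w (zigR 0 w.length k))

lemma IsDyck.zigR_partnerTime (hw : IsDyck w) (hk : k < w.length) :
    zigR 0 w.length (partnerTime w k) = partner w (zigR 0 w.length k) :=
  zigR_zigInv (hw.partner_lt_length (zigR_lt hk))

lemma IsDyck.isPairing_partnerTime (hw : IsDyck w) : IsPairing w.length (partnerTime w) where
  lt k hk := zigInv_lt (hw.partner_lt_length (zigR_lt hk))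
  involutive k hk := by
    rw [partnerTime, hw.zigR_partnerTime hk, hw.partner_partner (zigR_lt hk), zigInv_zigR hk]
  ne k hk h := hw.partner_ne (zigR_lt hk) (by rw [← hw.zigR_partnerTime hk, h])

lemma length_psi (w : List Bool) : (psi w).length = w.length := by
  simp [psi, psiR]

lemma IsDyck.psi_eq (hw : IsDyck w) : psi w = pairingWord w.length (partnerTime w) := by
  refine List.ext_getElem (by simp [length_psi, pairingWord]) fun k hk _ => ?_
  rw [length_psi] at hk
  have hread : (∃ p' < k, MatchPair w (zigR 0 w.length p') (zigR 0 w.length k)) ↔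
      partnerTime w k < k := by
    constructor
    · rintro ⟨p', hp', hm⟩
      rwa [partnerTime, hm.symm.partner_eq, zigInv_zigR (by omega)]
    · intro h
      exact ⟨_, h, hw.zigR_partnerTime hk ▸ (hw.matchPair_partner (zigR_lt hk)).symm⟩
  have hne := hw.isPairing_partnerTime.ne k hk
  simp only [psi, psiR, List.getElem_ofFn, pairingWord, List.getElem_map, List.getElem_range,
    hread]
  split_ifs <;> simp <;> omega

lemma isDyck_psi (hw : IsDyck w) : IsDyck (psi w) :=
  hw.psi_eq ▸ hw.isPairing_partnerTime.isDyck_pairingWord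

lemma IsDyck.zigR_partnerTime_lt {a c : ℕ} (hw : IsDyck w) (ha : a < w.length)
    (hc : c < w.length) (hac : zigR 0 w.length a < zigR 0 w.length c)
    (hca : zigR 0 w.length c < zigR 0 w.length (partnerTime w a)) :
    zigR 0 w.length (partnerTime w c) < zigR 0 w.length (partnerTime w a) := by
  rw [hw.zigR_partnerTime ha] at hca ⊢
  rw [hw.zigR_partnerTime hc]
  exact hw.partner_lt_partner (zigR_lt ha) hac hca

lemma IsDyck.closesOwnSideIffOpen (hw : IsDyck w) :
    ClosesOwnSideIffOpen w.length (partnerTime w) := by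
  intro k hk hfk
  have hP := hw.isPairing_partnerTime
  have ord := fun s t (hs : s < w.length) (ht : t < w.length) =>
    zigR_lt_zigR_iff hw.length_even hs ht
  constructor
  · intro hpar
    refine Finset.card_ne_zero.mpr ⟨partnerTime w k, ?_⟩
    simp only [Finset.mem_filter, Finset.mem_range, hP.involutive k hk]
    exact ⟨hfk, hpar, le_rfl⟩
  · intro hopen
    obtain ⟨t, ht⟩ := Finset.card_ne_zero.mp hopen
    simp only [Finset.mem_filter, Finset.mem_range] at ht
    obtain ⟨htk, htpar, hkft⟩ := ht
    by_contra hpar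
    have hft : k < partnerTime w t := by
      refine lt_of_le_of_ne hkft fun h => hpar ?_
      rwa [show partnerTime w k = t by rw [h, hP.involutive t (by omega)]]
    have hfkL := hP.lt k hk
    have hftL := hP.lt t (by omega)
    -- the arcs of `t` and `k` would cross
    rcases Nat.mod_two_eq_zero_or_one k with hk2 | hk2
    · have := hw.zigR_partnerTime_lt (by omega) hk ((ord t k (by omega) hk).2 (by omega))
        ((ord k (partnerTime w t) hk hftL).2 (by omega))
      have := (ord (partnerTime w t) (partnerTime w k) hftL hfkL).2 (by omega)
      omega
    · have := hw.zigR_partnerTime_lt hfkL hftL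
        ((ord (partnerTime w k) (partnerTime w t) hfkL hftL).2 (by omega))
        (by rw [hP.involutive k hk]; exact (ord (partnerTime w t) k hftL hk).2 (by omega))
      rw [hP.involutive k hk, hP.involutive t (by omega)] at this
      have := (ord k t hk (by omega)).2 (by omega)
      omega

lemma IsDyck.getElem?_zigR (hw : IsDyck w) (hk : k < w.length) :
    w[zigR 0 w.length k]? = some (decide ((k < partnerTime w k ∧ k % 2 = 0) ∨
      (partnerTime w k < k ∧ partnerTime w k % 2 = 1))) := by
  rw [hw.getElem?_eq_decide (zigR_lt hk), ← hw.zigR_partnerTime hk]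
  exact congrArg some (decide_eq_decide.mpr
    (zigR_lt_zigR_iff hw.length_even hk (hw.isPairing_partnerTime.lt k hk)))

lemma IsDyck.eq_of_psi_eq {w' : List Bool} (hw : IsDyck w) (hw' : IsDyck w')
    (h : psi w = psi w') : w = w' := by
  have hL : w.length = w'.length := by rw [← length_psi w, h, length_psi]
  have hord : ∀ k < w.length, k < partnerTime w k ↔ k < partnerTime w' k := by
    intro k hk
    have := congrArg (·[k]?) (hw.psi_eq.symm.trans (h.trans hw'.psi_eq))
    simpa [pairingWord, hk, ← hL] using this
  have hpar := hw.isPairing_partnerTime.mod_two_eq_of_lt_iff (hL ▸ hw'.isPairing_partnerTime)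
    hw.closesOwnSideIffOpen (hL ▸ hw'.closesOwnSideIffOpen) hord
  refine List.ext_getElem? fun p => ?_
  by_cases hp : p < w.length
  · obtain ⟨k, hk, rfl⟩ : ∃ k < w.length, zigR 0 w.length k = p :=
      ⟨zigInv _ p, zigInv_lt hp, zigR_zigInv hp⟩
    rw [hw.getElem?_zigR hk, hL, hw'.getElem?_zigR (hL ▸ hk)]
    have := hord k hk
    have := hw.isPairing_partnerTime.ne k hk
    have := hw'.isPairing_partnerTime.ne k (hL ▸ hk)
    have := hpar k hk
    simp only [Option.some_inj, decide_eq_decide]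
    omega
  · rw [List.getElem?_eq_none (by omega), List.getElem?_eq_none (by omega)]

end Psi

/-- `Ψ` is a bijection from `D_n` to itself, for every `n ≥ 0`. -/
theorem psi_bijOn (n : ℕ) :
    Set.BijOn psi {w : List Bool | IsDyck w ∧ w.length = 2 * n}
      {w : List Bool | IsDyck w ∧ w.length = 2 * n} := by
  have hfin : {w : List Bool | IsDyck w ∧ w.length = 2 * n}.Finite :=
    (List.finite_length_eq Bool (2 * n)).subset fun w hw => hw.2
  have hmaps : Set.MapsTo psi {w : List Bool | IsDyck w ∧ w.length = 2 * n}
      {w : List Bool | IsDyck w ∧ w.length = 2 * n} :=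
    fun w hw => ⟨isDyck_psi hw.1, (length_psi w).trans hw.2⟩
  exact (hfin.injOn_iff_bijOn_of_mapsTo hmaps).mp fun w hw w' hw' h => hw.1.eq_of_psi_eq hw'.1 h

end DyckBij
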